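/- Pauli-subset locking requires an exponentially large key: suppose E(x, (u,v)) = σ_x^u σ_z^v |x⟩ is an ε-locking scheme for n-bit messages where the key (U,V) is uniform on a set S ⊆ {0,1}^{2n}. Then |S| ≥ (1−ε)·2^n. -/

import Mathlib

open Matrix
open scoped BigOperators ComplexOrder

/-- The Pauli operator `σ_x^u σ_z^v` on `(ℂ²)^{⊗n}`, acting on computational basis
states by `σ_x^u σ_z^v |x⟩ = (−1)^{v·x} |x + u⟩`. -/
noncomputable def pauliXZ (n : ℕ) (u v : Fin n → Fin 2) :
    Matrix (Fin n → Fin 2) (Fin n → Fin 2) ℂ :=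
  fun i x => if i = x + u then (-1 : ℂ) ^ (∑ j, (v j : ℕ) * (x j : ℕ)) else 0

/-- The Pauli encoding `E(x, (u,v)) = σ_x^u σ_z^v |x⟩⟨x| (σ_x^u σ_z^v)†`. -/
noncomputable def pauliEnc (n : ℕ) (x : Fin n → Fin 2) (k : (Fin n → Fin 2) × (Fin n → Fin 2)) :
    Matrix (Fin n → Fin 2) (Fin n → Fin 2) ℂ :=
  pauliXZ n k.1 k.2 * Matrix.single x x (1 : ℂ) * (pauliXZ n k.1 k.2)ᴴ

/-- The joint probability `P(I = i, X = x)` for `X` uniform on `{0,1}^n`, the key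
uniform on `S` and independent of `X`, and the POVM `{M_i}` measured on `E(X, K)`. -/
noncomputable def pauliProb (n : ℕ) (S : Finset ((Fin n → Fin 2) × (Fin n → Fin 2)))
    (m : ℕ) (M : Fin m → Matrix (Fin n → Fin 2) (Fin n → Fin 2) ℂ)
    (i : Fin m) (x : Fin n → Fin 2) : ℝ :=
  (1 / (((2 : ℝ) ^ n) * S.card)) * ∑ k ∈ S, ((M i * pauliEnc n x k).trace).re

/-!
Measure the ciphertext in the computational basis. Since `σ_x^u σ_z^v |x⟩ = ±|x + u⟩`, the
outcome `y` is consistent only with the messages `y - u`, `(u, v) ∈ S`, so the posterior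
distribution of `X` given that outcome is supported on at most `|S|` points. A distribution
supported on `t` points of a set of size `N` is at total variation distance at least `1 - t/N`
from the uniform one, hence `1 - |S|/2^n ≤ ε`.
-/

open Finset

lemma Matrix.mul_single_one_mul_conjTranspose_apply_self {m n α : Type*} [Fintype n]
    [DecidableEq n] [Semiring α] [Star α] (A : Matrix m n α) (x : n) (y : m) :
    (A * single x x (1 : α) * Aᴴ) y y = A y x * star (A y x) := by
  simp [mul_apply, single, ite_and]

lemma one_sub_card_div_le_half_sum_abs_sub_uniform {α : Type*} [Fintype α] {p : α → ℝ}
    (T : Finset α) (hsupp : ∀ x ∉ T, p x = 0) (hsum : ∑ x, p x = 1) :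
    1 - #T / Fintype.card α ≤ (1 / 2) * ∑ x, |p x - 1 / Fintype.card α| := by
  classical
  set q : ℝ := 1 / Fintype.card α
  have hcard : (Fintype.card α : ℝ) * q = 1 := by
    have : Fintype.card α ≠ 0 := fun h => by simp [Fintype.card_eq_zero_iff.1 h] at hsum
    simp [q, this]
  have hin : 1 - #T * q ≤ ∑ x ∈ T, |p x - q| := calc
    1 - #T * q = ∑ x ∈ T, (p x - q) := by
      rw [sum_sub_distrib, sum_const, nsmul_eq_mul, ← hsum,
        ← sum_subset (subset_univ T) fun x _ hx => hsupp x hx]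
    _ ≤ ∑ x ∈ T, |p x - q| := sum_le_sum fun x _ => le_abs_self _
  have hout : ∑ x ∈ Tᶜ, |p x - q| = 1 - #T * q := by
    rw [sum_congr rfl fun x hx => by rw [hsupp x (mem_compl.1 hx), zero_sub, abs_neg,
      abs_of_nonneg (by positivity)], sum_const, nsmul_eq_mul, card_compl,
      Nat.cast_sub (card_le_univ T)]
    linarith
  rw [← sum_add_sum_compl T, div_eq_mul_one_div (#T : ℝ)]
  linarith

lemma one_sub_card_div_le_half_sum_abs_fiber_sub_uniform {κ α : Type*} [Fintype α]
    [DecidableEq α] (f : κ → α) {S : Finset κ} (hS : S.Nonempty) :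
    1 - #S / Fintype.card α ≤
      (1 / 2) * ∑ x, |(#{k ∈ S | f k = x} : ℝ) / #S - 1 / Fintype.card α| := by
  refine le_trans ?_ (one_sub_card_div_le_half_sum_abs_sub_uniform (S.image f) ?_ ?_)
  · gcongr
    exact_mod_cast card_image_le
  · intro x hx
    rw [filter_eq_empty_iff.2 fun k hk hkx => hx (mem_image.2 ⟨k, hk, hkx⟩), card_empty,
      Nat.cast_zero, zero_div]
  · rw [← sum_div, div_eq_one_iff_eq (by exact_mod_cast hS.card_pos.ne'),
      ← Nat.cast_sum, ← card_eq_sum_card_fiberwise fun k _ => mem_univ (f k)]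

noncomputable def basisPOVM (α : Type*) [Fintype α] [DecidableEq α] :
    Fin (Fintype.card α) → Matrix α α ℂ :=
  fun i => single ((Fintype.equivFin α).symm i) ((Fintype.equivFin α).symm i) 1

section basisPOVM

variable {α : Type*} [Fintype α] [DecidableEq α]

lemma basisPOVM_posSemidef (i : Fin (Fintype.card α)) : (basisPOVM α i).PosSemidef := by
  simpa only [basisPOVM, diagonal_single] using
    PosSemidef.diagonal (n := α) (Pi.single_nonneg.2 (zero_le_one' ℂ))

lemma sum_basisPOVM : ∑ i, basisPOVM α i = 1 :=
  ((Fintype.equivFin α).symm.sum_comp fun x => single x x (1 : ℂ)).trans sum_single_one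

lemma basisPOVM_equivFin (y : α) : basisPOVM α (Fintype.equivFin α y) = single y y 1 := by
  simp only [basisPOVM, Equiv.symm_apply_apply]

end basisPOVM

section pauliProb

variable {n m : ℕ} {S : Finset ((Fin n → Fin 2) × (Fin n → Fin 2))}
  {M : Fin m → Matrix (Fin n → Fin 2) (Fin n → Fin 2) ℂ} {i : Fin m} {y : Fin n → Fin 2}

lemma pauliEnc_apply_self (x y : Fin n → Fin 2) (k : (Fin n → Fin 2) × (Fin n → Fin 2)) :
    pauliEnc n x k y y = if y = x + k.1 then 1 else 0 := by
  rw [pauliEnc, mul_single_one_mul_conjTranspose_apply_self, pauliXZ]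
  split_ifs
  · rw [star_pow, star_neg, star_one, ← mul_pow, neg_one_mul, neg_neg, one_pow]
  · exact zero_mul _

lemma pauliProb_of_eq_single (hM : M i = single y y 1) (x : Fin n → Fin 2) :
    pauliProb n S m M i x = #{k ∈ S | y - k.1 = x} / (2 ^ n * #S) := by
  simp only [pauliProb, hM, trace_single_mul, one_smul, pauliEnc_apply_self, sub_eq_iff_eq_add]
  rw [one_div_mul_eq_div]
  simp only [apply_ite Complex.re, Complex.one_re, Complex.zero_re, sum_boole]

lemma sum_pauliProb_of_eq_single (hS : S.Nonempty) (hM : M i = single y y 1) :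
    ∑ x, pauliProb n S m M i x = 1 / 2 ^ n := by
  have hcount : ∑ x, (#{k ∈ S | y - k.1 = x} : ℝ) = #S := by
    exact_mod_cast (card_eq_sum_card_fiberwise (f := fun k : _ × _ => y - k.1)
      fun k _ => mem_univ _).symm
  have : (#S : ℝ) ≠ 0 := by exact_mod_cast hS.card_pos.ne'
  simp only [pauliProb_of_eq_single hM, ← sum_div, hcount]
  field_simp

lemma pauliProb_div_sum_of_eq_single (hS : S.Nonempty) (hM : M i = single y y 1)
    (x : Fin n → Fin 2) :
    pauliProb n S m M i x / ∑ x', pauliProb n S m M i x' = #{k ∈ S | y - k.1 = x} / #S := by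
  rw [sum_pauliProb_of_eq_single hS hM, pauliProb_of_eq_single hM]
  field_simp

end pauliProb

theorem stmt19_general (n : ℕ) (ε : ℝ)
    (S : Finset ((Fin n → Fin 2) × (Fin n → Fin 2))) (hS : S.Nonempty)
    (hlock : ∀ (m : ℕ) (M : Fin m → Matrix (Fin n → Fin 2) (Fin n → Fin 2) ℂ),
      (∀ i, (M i).PosSemidef) → (∑ i, M i = 1) →
      ∀ i : Fin m, 0 < ∑ x : Fin n → Fin 2, pauliProb n S m M i x →
        (1 / 2) * ∑ x : Fin n → Fin 2,
            |pauliProb n S m M i x / (∑ x', pauliProb n S m M i x')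
              - 1 / (2 : ℝ) ^ n| ≤ ε) :
    (1 - ε) * (2 : ℝ) ^ n ≤ S.card := by
  have hM := basisPOVM_equivFin (0 : Fin n → Fin 2)
  have hlocked := hlock _ _ basisPOVM_posSemidef sum_basisPOVM _
    (by rw [sum_pauliProb_of_eq_single hS hM]; positivity)
  simp only [pauliProb_div_sum_of_eq_single hS hM] at hlocked
  have hfar := one_sub_card_div_le_half_sum_abs_fiber_sub_uniform (fun k : _ × _ => 0 - k.1) hS
  simp only [Fintype.card_fun, Fintype.card_fin, Nat.cast_pow, Nat.cast_ofNat] at hfar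
  have hbound : 1 - #S / (2 : ℝ) ^ n ≤ ε := hfar.trans hlocked
  rw [sub_le_comm, le_div_iff₀ (by positivity)] at hbound
  linarith

/-- Pauli-subset locking requires an exponentially large key: suppose
`E(x, (u,v)) = σ_x^u σ_z^v |x⟩` is an `ε`-locking scheme for `n`-bit messages where the
key `(U,V)` is uniform on a set `S ⊆ {0,1}^{2n}`.  Then `|S| ≥ (1−ε)·2^n`. -/
theorem stmt19 (n : ℕ) (ε : ℝ) (hε : 0 ≤ ε) (hε1 : ε ≤ 1)
    (S : Finset ((Fin n → Fin 2) × (Fin n → Fin 2))) (hS : S.Nonempty)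
    (hlock : ∀ (m : ℕ) (M : Fin m → Matrix (Fin n → Fin 2) (Fin n → Fin 2) ℂ),
      (∀ i, (M i).PosSemidef) → (∑ i, M i = 1) →
      ∀ i : Fin m, 0 < ∑ x : Fin n → Fin 2, pauliProb n S m M i x →
        (1 / 2) * ∑ x : Fin n → Fin 2,
            |pauliProb n S m M i x / (∑ x', pauliProb n S m M i x')
              - 1 / (2 : ℝ) ^ n| ≤ ε) :
    (1 - ε) * (2 : ℝ) ^ n ≤ S.card :=
  stmt19_general n ε S hS hlock
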